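/- With f(x) = ln x on (0,1] and f(x) = x−1 on (1,∞), for each N ∈ ℕ and aₙ := N²/n², one has Σ_{n=1}^∞ A_f(a₁,…,aₙ) ≥ N²·ln N; consequently the Hardy constant of A_f is +∞. -/

import Mathlib

/-! For `n < N` every term `aₖ = N²/(k+1)²` with `k ≤ n` is at least `1`, where `f` is affine, so
`A_f(a₁,…,aₙ₊₁)` is the arithmetic mean, which is at least `N²/(n+1)`; summing the harmonic series
gives `N² log N`. The whole series converges because `log ≤ f ≤ log + max aₖ`, so `A_f` is at most
`exp N²` times the geometric mean, which is `O(1/n²)` by `n! ≥ (n/e)ⁿ`. As `Σ aₙ = N² ζ(2)`, the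
ratio of the two series is at least `log N / ζ(2)`, which is unbounded. -/

/-- The quasi-arithmetic mean generated by `f`, the inverse being taken on `I`. -/
noncomputable def qam (f : ℝ → ℝ) (I : Set ℝ) (n : ℕ) (a : Fin n → ℝ) : ℝ :=
  Function.invFunOn f I ((∑ i, f (a i)) / n)

/-- The specific generator: `f x = ln x` on `(0,1]` and `f x = x - 1` on `(1,∞)`. -/
noncomputable def fExa : ℝ → ℝ := fun x => if x ≤ 1 then Real.log x else x - 1

open Real Set Finset Filter
open scoped Nat

section QuasiArithmeticMean

variable {f : ℝ → ℝ} {I : Set ℝ} {n : ℕ} {a : Fin n → ℝ}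

lemma qam_mem (hf : SurjOn f I univ) : qam f I n a ∈ I :=
  Function.invFunOn_mem (hf (mem_univ _))

lemma apply_qam (hf : SurjOn f I univ) : f (qam f I n a) = (∑ i, f (a i)) / n :=
  Function.invFunOn_eq (hf (mem_univ _))

lemma qam_eq_of_apply_eq (hf : InjOn f I) {t : ℝ} (ht : t ∈ I)
    (h : f t = (∑ i, f (a i)) / n) : qam f I n a = t := by
  rw [qam, ← h]
  exact hf.leftInvOn_invFunOn ht

end QuasiArithmeticMean

section Generator

variable {x : ℝ}

lemma fExa_of_one_le (hx : 1 ≤ x) : fExa x = x - 1 := by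
  rcases hx.eq_or_lt with rfl | hx
  · simp [fExa]
  · simp [fExa, hx.not_ge]

lemma log_le_fExa (hx : 0 < x) : log x ≤ fExa x := by
  unfold fExa
  split_ifs
  exacts [le_rfl, log_le_sub_one_of_pos hx]

lemma fExa_le_log_add_self (hx : 0 < x) : fExa x ≤ log x + x := by
  unfold fExa
  split_ifs with h
  · linarith
  · linarith [log_nonneg (le_of_not_ge h)]

lemma strictMonoOn_fExa : StrictMonoOn fExa (Ioi 0) := by
  intro x hx y hy hxy
  unfold fExa
  split_ifs with hx1 hy1 hy1
  · exact log_lt_log hx hxy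
  · linarith [log_nonpos (le_of_lt hx) hx1]
  · linarith
  · linarith

lemma surjOn_fExa : SurjOn fExa (Ioi 0) univ := by
  intro y _
  rcases le_or_gt y 0 with hy | hy
  · exact ⟨exp y, exp_pos y, by simp [fExa, exp_le_one_iff.2 hy]⟩
  · exact ⟨y + 1, by simp only [Set.mem_Ioi]; linarith, by simp [fExa, hy.not_ge]⟩

variable {n : ℕ} {a : Fin n → ℝ}

lemma qam_fExa_eq_of_one_le (hn : n ≠ 0) (ha : ∀ i, 1 ≤ a i) :
    qam fExa (Ioi 0) n a = (∑ i, a i) / n := by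
  have hn' : (0 : ℝ) < n := by positivity
  have hmean : 1 ≤ (∑ i, a i) / n := by
    rw [le_div_iff₀ hn']
    simpa using card_nsmul_le_sum univ a 1 fun i _ => ha i
  refine qam_eq_of_apply_eq strictMonoOn_fExa.injOn (one_pos.trans_le hmean) ?_
  simp only [fExa_of_one_le (ha _), fExa_of_one_le hmean, sum_sub_distrib, sum_const, card_univ,
    Fintype.card_fin, nsmul_eq_mul, mul_one]
  field_simp

lemma log_qam_fExa_le (hn : n ≠ 0) (ha : ∀ i, 0 < a i) {B : ℝ} (hB : ∀ i, a i ≤ B) :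
    log (qam fExa (Ioi 0) n a) ≤ (∑ i, log (a i)) / n + B := calc
  log (qam fExa (Ioi 0) n a) ≤ fExa (qam fExa (Ioi 0) n a) := log_le_fExa (qam_mem surjOn_fExa)
  _ = (∑ i, fExa (a i)) / n := apply_qam surjOn_fExa
  _ ≤ (∑ i, (log (a i) + B)) / n := by
    gcongr with i
    exact (fExa_le_log_add_self (ha i)).trans (by linarith [hB i])
  _ = (∑ i, log (a i)) / n + B := by
    rw [sum_add_distrib, sum_const, card_univ, Fintype.card_fin, nsmul_eq_mul]
    field_simp

end Generator

lemma mul_log_sub_le_log_factorial (n : ℕ) : n * log n - n ≤ log n ! := by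
  have h := pow_div_factorial_le_exp (x := (n : ℝ)) n.cast_nonneg n
  rw [div_le_iff₀ (by positivity)] at h
  rcases n.eq_zero_or_pos with rfl | _
  · simp
  have h := log_le_log (by positivity) h
  rw [log_pow, log_mul (by positivity) (by positivity), log_exp] at h
  linarith

lemma summable_one_div_nat_add_one_sq : Summable fun n : ℕ => 1 / ((n : ℝ) + 1) ^ 2 := by
  simpa using (summable_nat_add_iff 1).2 (Real.summable_one_div_nat_pow.2 one_lt_two)

noncomputable def hardySeq (N n : ℕ) : ℝ := (N : ℝ) ^ 2 / ((n : ℝ) + 1) ^ 2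

noncomputable def prefixMean (f : ℝ → ℝ) (I : Set ℝ) (a : ℕ → ℝ) (n : ℕ) : ℝ :=
  qam f I (n + 1) fun k : Fin (n + 1) => a k

section HardySeq

variable {N : ℕ}

lemma hardySeq_pos (hN : N ≠ 0) (n : ℕ) : 0 < hardySeq N n := by
  unfold hardySeq; positivity

lemma hardySeq_le_sq (n : ℕ) : hardySeq N n ≤ (N : ℝ) ^ 2 :=
  div_le_self (by positivity) (one_le_pow₀ (le_add_of_nonneg_left n.cast_nonneg))

lemma one_le_hardySeq {n : ℕ} (hn : n < N) : 1 ≤ hardySeq N n := by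
  have : (n : ℝ) + 1 ≤ N := by exact_mod_cast hn
  rw [hardySeq, one_le_div (by positivity)]
  gcongr

lemma hardySeq_eq_mul (N n : ℕ) : hardySeq N n = (N : ℝ) ^ 2 * (1 / ((n : ℝ) + 1) ^ 2) :=
  (mul_one_div _ _).symm

lemma summable_hardySeq (N : ℕ) : Summable (hardySeq N) :=
  (summable_one_div_nat_add_one_sq.mul_left _).congr fun n => (hardySeq_eq_mul N n).symm

lemma tsum_hardySeq (N : ℕ) :
    ∑' n, hardySeq N n = (N : ℝ) ^ 2 * ∑' n : ℕ, 1 / ((n : ℝ) + 1) ^ 2 := by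
  simp only [hardySeq_eq_mul, tsum_mul_left]

lemma log_hardySeq (hN : N ≠ 0) (n : ℕ) :
    log (hardySeq N n) = 2 * log N - 2 * log ((n : ℝ) + 1) := by
  rw [hardySeq, log_div (by positivity) (by positivity), log_pow, log_pow]
  push_cast
  ring

lemma sum_range_log_hardySeq (hN : N ≠ 0) (n : ℕ) :
    ∑ k ∈ range n, log (hardySeq N k) = 2 * n * log N - 2 * log n ! := by
  rw [sum_congr rfl fun k _ => log_hardySeq hN k, sum_sub_distrib, sum_const, card_range,
    ← mul_sum, ← log_prod fun k _ => by positivity, ← prod_range_add_one_eq_factorial]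
  push_cast
  ring

lemma div_le_prefixMean_hardySeq {n : ℕ} (hn : n < N) :
    (N : ℝ) ^ 2 / ((n : ℝ) + 1) ≤ prefixMean fExa (Ioi 0) (hardySeq N) n := by
  rw [prefixMean, qam_fExa_eq_of_one_le n.succ_ne_zero fun k => one_le_hardySeq (k.2.trans_le hn)]
  push_cast
  gcongr
  calc (N : ℝ) ^ 2 = hardySeq N (0 : Fin (n + 1)) := by simp [hardySeq]
    _ ≤ ∑ k : Fin (n + 1), hardySeq N k :=
      single_le_sum (f := fun k : Fin (n + 1) => hardySeq N k)
        (fun k _ => (one_pos.trans_le (one_le_hardySeq (k.2.trans_le hn))).le) (mem_univ 0)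

lemma prefixMean_hardySeq_le (hN : N ≠ 0) (n : ℕ) :
    prefixMean fExa (Ioi 0) (hardySeq N) n ≤
      (N : ℝ) ^ 2 * exp ((N : ℝ) ^ 2 + 2) / ((n : ℝ) + 1) ^ 2 := by
  have hM : 0 < prefixMean fExa (Ioi 0) (hardySeq N) n := qam_mem surjOn_fExa
  have hn : (0 : ℝ) < n + 1 := by positivity
  rw [← log_le_log_iff hM (by positivity), log_div (by positivity) (by positivity),
    log_mul (by positivity) (by positivity), log_exp, log_pow, log_pow]
  have hfact := mul_log_sub_le_log_factorial (n + 1)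
  push_cast at hfact ⊢
  calc log (prefixMean fExa (Ioi 0) (hardySeq N) n)
      ≤ (∑ k : Fin (n + 1), log (hardySeq N k)) / (n + 1 : ℕ) + (N : ℝ) ^ 2 :=
        log_qam_fExa_le n.succ_ne_zero (fun k => hardySeq_pos hN k) fun k => hardySeq_le_sq k
    _ = (2 * (n + 1) * log N - 2 * log (n + 1)!) / (n + 1) + (N : ℝ) ^ 2 := by
        rw [Fin.sum_univ_eq_sum_range (fun k => log (hardySeq N k)), sum_range_log_hardySeq hN]
        push_cast
        ring
    _ ≤ 2 * log N + ((N : ℝ) ^ 2 + 2) - 2 * log (n + 1) := by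
        rw [div_add' _ _ _ hn.ne', div_le_iff₀ hn]
        nlinarith

lemma summable_prefixMean_hardySeq (hN : N ≠ 0) :
    Summable (prefixMean fExa (Ioi 0) (hardySeq N)) := by
  refine .of_nonneg_of_le (fun n => (qam_mem surjOn_fExa).le) (prefixMean_hardySeq_le hN) ?_
  simpa only [mul_one_div] using summable_one_div_nat_add_one_sq.mul_left _

lemma sq_mul_log_le_tsum_prefixMean_hardySeq (hN : N ≠ 0) :
    (N : ℝ) ^ 2 * log N ≤ ∑' n, prefixMean fExa (Ioi 0) (hardySeq N) n := calc
  (N : ℝ) ^ 2 * log N ≤ (N : ℝ) ^ 2 * ∑ n ∈ range N, 1 / ((n : ℝ) + 1) := by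
    gcongr
    have hH := log_add_one_le_harmonic N
    simp only [harmonic, Rat.cast_sum, Rat.cast_inv] at hH
    push_cast at hH
    simp only [one_div]
    exact le_trans (log_le_log (by positivity) (by linarith)) hH
  _ = ∑ n ∈ range N, (N : ℝ) ^ 2 / ((n : ℝ) + 1) := by simp only [mul_sum, mul_one_div]
  _ ≤ ∑ n ∈ range N, prefixMean fExa (Ioi 0) (hardySeq N) n :=
    sum_le_sum fun n hn => div_le_prefixMean_hardySeq (mem_range.1 hn)
  _ ≤ ∑' n, prefixMean fExa (Ioi 0) (hardySeq N) n :=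
    (summable_prefixMean_hardySeq hN).sum_le_tsum _ fun n _ => (qam_mem surjOn_fExa).le

end HardySeq

theorem stmt_16 :
    (∀ N : ℕ, 1 ≤ N → ∀ a : ℕ → ℝ,
      (∀ n, a n = (N : ℝ) ^ 2 / ((n : ℝ) + 1) ^ 2) →
      (N : ℝ) ^ 2 * Real.log N ≤
        ∑' n, qam fExa (Set.Ioi 0) (n + 1) (fun k : Fin (n + 1) => a (k : ℕ))) ∧
    ¬ (∃ C : ℝ, ∀ a : ℕ → ℝ, (∀ n, 0 < a n) → Summable a →
      Summable (fun n => qam fExa (Set.Ioi 0) (n + 1) (fun k : Fin (n + 1) => a (k : ℕ))) ∧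
      ∑' n, qam fExa (Set.Ioi 0) (n + 1) (fun k : Fin (n + 1) => a (k : ℕ)) ≤
        C * ∑' n, a n) := by
  refine ⟨fun N hN a ha => ?_, ?_⟩
  · obtain rfl : a = hardySeq N := funext ha
    exact sq_mul_log_le_tsum_prefixMean_hardySeq (by omega)
  · rintro ⟨C, hC⟩
    set S := ∑' n : ℕ, 1 / ((n : ℝ) + 1) ^ 2
    have hlog_le : ∀ N : ℕ, N ≠ 0 → log N ≤ C * S := by
      intro N hN
      have h := (sq_mul_log_le_tsum_prefixMean_hardySeq hN).trans
        (hC _ (hardySeq_pos hN) (summable_hardySeq N)).2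
      rw [tsum_hardySeq, mul_left_comm] at h
      exact le_of_mul_le_mul_left h (by positivity)
    obtain ⟨N, hN, hlt⟩ := ((eventually_ne_atTop 0).and
      ((tendsto_log_atTop.comp tendsto_natCast_atTop_atTop).eventually_gt_atTop (C * S))).exists
    exact (hlog_le N hN).not_gt hlt
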